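/- arXiv:2005.02336 — 2 statements merged into one kernel-verified Lean document; each statement's English description precedes it below -/
import Mathlib

section
/- Let q : ℝ² → ℂ be twice continuously differentiable. Define Q(x,t) = [[0, q(x,t)],[−conj(q(x,t)), 0]], X(x,t,k) = ik·σ₃ + Q(x,t), and T(x,t,k) = −2ik²·σ₃ + i·σ₃·(Q_x(x,t) − Q(x,t)²) − 2k·Q(x,t). Then the zero-curvature condition X_t − T_x + [X,T] = 0 holds for all (x,t) ∈ ℝ² and all k ∈ ℂ if and only if q satisfies the focusing nonlinear Schrödinger equation iq_t + q_xx + 2|q|²q = 0 on ℝ². -/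
/-- Pauli matrix `σ₃`. -/
noncomputable def sigma3 : Matrix (Fin 2) (Fin 2) ℂ := !![1, 0; 0, -1]

/-- Entrywise derivative of a matrix-valued function of a real variable. -/
noncomputable def mderiv (F : ℝ → Matrix (Fin 2) (Fin 2) ℂ) (s : ℝ) :
    Matrix (Fin 2) (Fin 2) ℂ :=
  Matrix.of fun i j => deriv (fun u => F u i j) s

/-- The matrix `Q(x,t) = [[0, q],[−conj q, 0]]`. -/
noncomputable def Qmat (q : ℝ → ℝ → ℂ) (x t : ℝ) : Matrix (Fin 2) (Fin 2) ℂ :=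
  !![0, q x t; -(starRingEnd ℂ) (q x t), 0]

/-- The matrix `X(x,t,k) = ik·σ₃ + Q(x,t)`. -/
noncomputable def Xmat (q : ℝ → ℝ → ℂ) (x t : ℝ) (k : ℂ) : Matrix (Fin 2) (Fin 2) ℂ :=
  (Complex.I * k) • sigma3 + Qmat q x t

/-- The matrix `T(x,t,k) = −2ik²σ₃ + iσ₃(Q_x − Q²) − 2kQ`. -/
noncomputable def Tmat (q : ℝ → ℝ → ℂ) (x t : ℝ) (k : ℂ) : Matrix (Fin 2) (Fin 2) ℂ :=
  (-(2 * Complex.I * k ^ 2)) • sigma3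
    + Complex.I • (sigma3 * (mderiv (fun ξ => Qmat q ξ t) x - Qmat q x t ^ 2))
    - (2 * k) • Qmat q x t

/-- For `q : ℝ² → ℂ` twice continuously differentiable, the zero-curvature condition
`X_t − T_x + [X,T] = 0` holds for all `(x,t) ∈ ℝ²` and all `k ∈ ℂ` if and only if
`q` satisfies the focusing NLS equation `i q_t + q_xx + 2|q|² q = 0` on `ℝ²`. -/
theorem zero_curvature_iff_NLS (q : ℝ → ℝ → ℂ)
    (hq : ContDiff ℝ 2 (fun p : ℝ × ℝ => q p.1 p.2)) :
    (∀ (x t : ℝ) (k : ℂ),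
        mderiv (fun τ => Xmat q x τ k) t - mderiv (fun ξ => Tmat q ξ t k) x
          + (Xmat q x t k * Tmat q x t k - Tmat q x t k * Xmat q x t k) = 0)
    ↔ (∀ x t : ℝ,
        Complex.I * deriv (fun τ => q x τ) t
          + deriv (fun ξ => deriv (fun ξ' => q ξ' t) ξ) x
          + 2 * ((‖q x t‖ : ℝ) : ℂ) ^ 2 * q x t = 0) := by
  have hd : Differentiable ℝ (fun p : ℝ × ℝ => q p.1 p.2) := hq.differentiable two_ne_zero
  have hA : ∀ x t : ℝ, HasDerivAt (fun ξ => q ξ t) (deriv (fun ξ => q ξ t) x) x := fun x t =>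
    ((hd.comp (differentiable_id.prodMk (differentiable_const t))).differentiableAt).hasDerivAt
  have hB : ∀ x t : ℝ, HasDerivAt (fun τ => q x τ) (deriv (fun τ => q x τ) t) t := fun x t =>
    ((hd.comp ((differentiable_const x).prodMk differentiable_id)).differentiableAt).hasDerivAt
  have hrw : ∀ t : ℝ, (fun ξ => deriv (fun ξ' => q ξ' t) ξ)
      = fun ξ => (fderiv ℝ (fun p : ℝ × ℝ => q p.1 p.2) (ξ, t)) (1, 0) := by
    intro t; funext ξ
    have h1 : HasDerivAt (fun ξ' : ℝ => (ξ', t)) ((1 : ℝ), (0 : ℝ)) ξ :=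
      (hasDerivAt_id ξ).prodMk (hasDerivAt_const ξ t)
    exact ((hd.differentiableAt.hasFDerivAt.comp_hasDerivAt ξ h1)).deriv
  have hG : Differentiable ℝ (fderiv ℝ (fun p : ℝ × ℝ => q p.1 p.2)) :=
    (hq.fderiv_right (m := 1) (by norm_num)).differentiable one_ne_zero
  have hC : ∀ x t : ℝ, HasDerivAt (fun ξ => deriv (fun ξ' => q ξ' t) ξ)
      (deriv (fun ξ => deriv (fun ξ' => q ξ' t) ξ) x) x := by
    intro x t
    rw [hrw t]
    exact (((hG.comp (differentiable_id.prodMk (differentiable_const t))).clm_apply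
      (differentiable_const _)).differentiableAt).hasDerivAt
  have hconj : ∀ {f : ℝ → ℂ} {f' : ℂ} {s : ℝ}, HasDerivAt f f' s →
      HasDerivAt (fun u => (starRingEnd ℂ) (f u)) ((starRingEnd ℂ) f') s := by
    intro f f' s h
    exact (Complex.conjCLE.toContinuousLinearMap.hasFDerivAt (x := f s)).comp_hasDerivAt s h
  have hmk : ∀ (a b c d : ℝ → ℂ) (a' b' c' d' : ℂ) (s : ℝ), HasDerivAt a a' s →
      HasDerivAt b b' s → HasDerivAt c c' s → HasDerivAt d d' s →
      mderiv (fun u => !![a u, b u; c u, d u]) s = !![a', b'; c', d'] := by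
    intro a b c d a' b' c' d' s ha hb hc hd'
    ext i j
    fin_cases i <;> fin_cases j
    · exact ha.deriv
    · exact hb.deriv
    · exact hc.deriv
    · exact hd'.deriv
  have hQd : ∀ x t : ℝ, mderiv (fun ξ => Qmat q ξ t) x
      = !![0, deriv (fun ξ => q ξ t) x; -(starRingEnd ℂ) (deriv (fun ξ => q ξ t) x), 0] := by
    intro x t
    exact hmk _ _ _ _ _ _ _ _ x (hasDerivAt_const x 0) (hA x t)
      ((hconj (hA x t)).neg) (hasDerivAt_const x 0)
  have hTeq : ∀ (x t : ℝ) (k : ℂ), Tmat q x t k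
      = !![-(2*Complex.I*k^2) + Complex.I*(q x t * (starRingEnd ℂ) (q x t)),
           Complex.I * deriv (fun ξ => q ξ t) x - 2*k*q x t;
           Complex.I * (starRingEnd ℂ) (deriv (fun ξ => q ξ t) x) + 2*k*(starRingEnd ℂ) (q x t),
           2*Complex.I*k^2 - Complex.I*(q x t * (starRingEnd ℂ) (q x t))] := by
    intro x t k
    rw [Tmat, hQd]
    ext i j
    fin_cases i <;> fin_cases j <;>
      · simp [Qmat, sigma3, pow_two, Matrix.mul_apply, Fin.sum_univ_two, Matrix.smul_apply,
          Matrix.sub_apply, Matrix.add_apply]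
        try ring
  have hXeq : ∀ (x t : ℝ) (k : ℂ), Xmat q x t k
      = !![Complex.I*k, q x t; -(starRingEnd ℂ) (q x t), -(Complex.I*k)] := by
    intro x t k
    ext i j
    fin_cases i <;> fin_cases j <;>
      · simp [Xmat, Qmat, sigma3, Matrix.smul_apply, Matrix.add_apply]
        try ring
  have hXd : ∀ (x t : ℝ) (k : ℂ), mderiv (fun τ => Xmat q x τ k) t
      = !![0, deriv (fun τ => q x τ) t;
           -(starRingEnd ℂ) (deriv (fun τ => q x τ) t), 0] := by
    intro x t k
    have hfun : (fun τ => Xmat q x τ k)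
        = fun τ => !![Complex.I*k, q x τ; -(starRingEnd ℂ) (q x τ), -(Complex.I*k)] :=
      funext fun τ => hXeq x τ k
    rw [hfun]
    exact hmk _ _ _ _ _ _ _ _ t (hasDerivAt_const t _) (hB x t)
      ((hconj (hB x t)).neg) (hasDerivAt_const t _)
  have hTd : ∀ (x t : ℝ) (k : ℂ), mderiv (fun ξ => Tmat q ξ t k) x
      = !![0 + Complex.I*(deriv (fun ξ => q ξ t) x * (starRingEnd ℂ) (q x t)
              + q x t * (starRingEnd ℂ) (deriv (fun ξ => q ξ t) x)),
           Complex.I * deriv (fun ξ => deriv (fun ξ' => q ξ' t) ξ) x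
              - 2*k*deriv (fun ξ => q ξ t) x;
           Complex.I * (starRingEnd ℂ) (deriv (fun ξ => deriv (fun ξ' => q ξ' t) ξ) x)
              + 2*k*(starRingEnd ℂ) (deriv (fun ξ => q ξ t) x),
           0 - Complex.I*(deriv (fun ξ => q ξ t) x * (starRingEnd ℂ) (q x t)
              + q x t * (starRingEnd ℂ) (deriv (fun ξ => q ξ t) x))] := by
    intro x t k
    have hfun : (fun ξ => Tmat q ξ t k) = fun ξ =>
        !![-(2*Complex.I*k^2) + Complex.I*(q ξ t * (starRingEnd ℂ) (q ξ t)),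
           Complex.I * deriv (fun ξ' => q ξ' t) ξ - 2*k*q ξ t;
           Complex.I * (starRingEnd ℂ) (deriv (fun ξ' => q ξ' t) ξ)
             + 2*k*(starRingEnd ℂ) (q ξ t),
           2*Complex.I*k^2 - Complex.I*(q ξ t * (starRingEnd ℂ) (q ξ t))] :=
      funext fun ξ => hTeq ξ t k
    rw [hfun]
    exact hmk _ _ _ _ _ _ _ _ x
      ((hasDerivAt_const x (-(2*Complex.I*k^2))).add
        (((hA x t).mul (hconj (hA x t))).const_mul Complex.I))
      (((hC x t).const_mul Complex.I).sub ((hA x t).const_mul (2*k)))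
      (((hconj (hC x t)).const_mul Complex.I).add ((hconj (hA x t)).const_mul (2*k)))
      ((hasDerivAt_const x (2*Complex.I*k^2)).sub
        (((hA x t).mul (hconj (hA x t))).const_mul Complex.I))
  have key : ∀ (x t : ℝ) (k : ℂ),
      mderiv (fun τ => Xmat q x τ k) t - mderiv (fun ξ => Tmat q ξ t k) x
        + (Xmat q x t k * Tmat q x t k - Tmat q x t k * Xmat q x t k)
      = !![0, deriv (fun τ => q x τ) t
              - Complex.I * deriv (fun ξ => deriv (fun ξ' => q ξ' t) ξ) x
              - 2*Complex.I*(q x t * q x t * (starRingEnd ℂ) (q x t));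
           -(starRingEnd ℂ) (deriv (fun τ => q x τ) t)
              - Complex.I * (starRingEnd ℂ) (deriv (fun ξ => deriv (fun ξ' => q ξ' t) ξ) x)
              - 2*Complex.I*(q x t * (starRingEnd ℂ) (q x t) * (starRingEnd ℂ) (q x t)), 0] := by
    intro x t k
    rw [hXd, hTd, hXeq, hTeq, Matrix.mul_fin_two, Matrix.mul_fin_two]
    ext i j
    fin_cases i <;> fin_cases j <;>
      simp only [Matrix.sub_apply, Matrix.add_apply, Matrix.cons_val', Matrix.cons_val_zero,
        Matrix.cons_val_one, Matrix.head_cons, Matrix.empty_val', Matrix.cons_val_fin_one,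
        Matrix.head_fin_const, Matrix.of_apply, Fin.mk_zero, Fin.mk_one]
    · ring
    · linear_combination (2*k*deriv (fun ξ => q ξ t) x) * Complex.I_sq
    · linear_combination (-(2*k*(starRingEnd ℂ) (deriv (fun ξ => q ξ t) x))) * Complex.I_sq
    · ring
  have habs : ∀ z : ℂ, ((‖z‖ : ℝ) : ℂ)^2 = z * (starRingEnd ℂ) z := by
    intro z
    rw [Complex.mul_conj]
    exact_mod_cast congrArg (Complex.ofReal ·) (Complex.sq_norm z)
  constructor
  · intro h x t
    have hk := h x t 0
    rw [key x t 0] at hk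
    have hE : deriv (fun τ => q x τ) t
        - Complex.I * deriv (fun ξ => deriv (fun ξ' => q ξ' t) ξ) x
        - 2*Complex.I*(q x t * q x t * (starRingEnd ℂ) (q x t)) = 0 := by
      simpa using congrFun (congrFun hk 0) 1
    rw [habs]
    linear_combination Complex.I * hE
      + (deriv (fun ξ => deriv (fun ξ' => q ξ' t) ξ) x
          + 2*(q x t * q x t * (starRingEnd ℂ) (q x t))) * Complex.I_sq
  · intro h x t k
    rw [key x t k]
    have hN := h x t
    rw [habs] at hN
    have hE : deriv (fun τ => q x τ) t
        - Complex.I * deriv (fun ξ => deriv (fun ξ' => q ξ' t) ξ) x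
        - 2*Complex.I*(q x t * q x t * (starRingEnd ℂ) (q x t)) = 0 := by
      linear_combination (-Complex.I) * hN + (deriv (fun τ => q x τ) t) * Complex.I_sq
    have hc := congrArg (starRingEnd ℂ) hE
    simp only [map_sub, map_mul, map_add, map_neg, map_zero, map_ofNat, Complex.conj_conj,
      Complex.conj_I] at hc
    ext i j
    fin_cases i <;> fin_cases j <;>
      simp only [Matrix.cons_val', Matrix.cons_val_zero, Matrix.cons_val_one, Matrix.head_cons,
        Matrix.empty_val', Matrix.cons_val_fin_one, Matrix.head_fin_const, Matrix.zero_apply,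
        Matrix.of_apply, Fin.mk_zero, Fin.mk_one] <;>
      first
        | rfl
        | linear_combination hE
        | linear_combination (-1 : ℂ) * hc
end

section
/- Let A > 0, V, δ ∈ ℝ, k ∈ ℂ, and let λ ∈ ℂ satisfy λ² = (k + V/2)² + A². Set f(x,t) = (1/2)(Vx + (V² − 2A²)t), θ(x,t) = λ(x − 2(k − V/2)t), q(x,t) = A·exp(−2i f(x,t) + iδ), Q(x,t) = [[0, q(x,t)],[−conj(q(x,t)), 0]], and E = I + (iA/(λ + (k + V/2)))·exp(iδσ₃)·σ₁ (note λ + (k + V/2) ≠ 0 automatically, since (λ − (k+V/2))(λ + (k+V/2)) = A² ≠ 0). Then the matrix function φ(x,t) = exp(−i f(x,t)σ₃)·E·exp(iθ(x,t)σ₃) satisfies both Lax pair equations φ_x = (ikσ₃ + Q)φ and φ_t = (−2ik²σ₃ + iσ₃(Q_x − Q²) − 2kQ)φ for all (x,t) ∈ ℝ². -/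
/-- Pauli matrix `σ₁`. -/
noncomputable def sigma1 : Matrix (Fin 2) (Fin 2) ℂ := !![0, 1; 1, 0]

/-- `exp(c·σ₃) = diag(e^c, e^{−c})` (matrix exponential of the diagonal matrix `cσ₃`). -/
noncomputable def dexp (c : ℂ) : Matrix (Fin 2) (Fin 2) ℂ :=
  !![Complex.exp c, 0; 0, Complex.exp (-c)]

/-- `f(x,t) = (1/2)(Vx + (V² − 2A²)t)`. -/
noncomputable def fph (A V : ℝ) (x t : ℝ) : ℝ := (V * x + (V ^ 2 - 2 * A ^ 2) * t) / 2

/-- The plane wave `q(x,t) = A·exp(−2i f(x,t) + iδ)`. -/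
noncomputable def qpw (A V δ : ℝ) (x t : ℝ) : ℂ :=
  (A : ℂ) * Complex.exp (-2 * Complex.I * ((fph A V x t : ℝ) : ℂ) + Complex.I * (δ : ℂ))

/-- `E = I + (iA/(λ + w))·exp(iδσ₃)·σ₁`. -/
noncomputable def Emat (A δ : ℝ) (w lam : ℂ) : Matrix (Fin 2) (Fin 2) ℂ :=
  1 + (Complex.I * (A : ℂ) / (lam + w)) • (dexp (Complex.I * (δ : ℂ)) * sigma1)

/-- `θ(x,t) = λ(x − 2(k − V/2)t)`. -/
noncomputable def thetaPW (V : ℝ) (k lam : ℂ) (x t : ℝ) : ℂ :=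
  lam * ((x : ℂ) - 2 * (k - (V : ℂ) / 2) * (t : ℂ))

/-- `φ(x,t) = exp(−i f(x,t)σ₃)·E·exp(iθ(x,t)σ₃)`. -/
noncomputable def phiPW (A V δ : ℝ) (k lam : ℂ) (x t : ℝ) : Matrix (Fin 2) (Fin 2) ℂ :=
  dexp (-Complex.I * ((fph A V x t : ℝ) : ℂ)) * Emat A δ (k + (V : ℂ) / 2) lam *
    dexp (Complex.I * thetaPW V k lam x t)

noncomputable def pexp (a d g : ℂ) (x t : ℝ) : ℂ := Complex.exp (a * x + d * t + g)

local notation "𝕚" => Complex.I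

lemma pexp_fst (C a d g : ℂ) (t x : ℝ) :
    deriv (fun u : ℝ => C * pexp a d g u t) x = a * (C * pexp a d g x t) := by
  have h1 : HasDerivAt (fun u : ℝ => a * (u : ℂ) + d * t + g) a x := by
    have := ((Complex.ofRealCLM.hasDerivAt (x := x)).const_mul a).add_const (d * (t:ℂ) + g)
    simpa [add_assoc] using this
  have h2 := (h1.cexp.const_mul C)
  simp only [pexp]
  rw [h2.deriv]; ring

lemma pexp_snd (C a d g : ℂ) (x t : ℝ) :
    deriv (fun u : ℝ => C * pexp a d g x u) t = d * (C * pexp a d g x t) := by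
  have h1 : HasDerivAt (fun u : ℝ => a * (x:ℂ) + d * (u : ℂ) + g) d t := by
    have := (((Complex.ofRealCLM.hasDerivAt (x := t)).const_mul d).add_const g).const_add (a * (x:ℂ))
    simpa [add_assoc] using this
  have h2 := (h1.cexp.const_mul C)
  simp only [pexp]
  rw [h2.deriv]; ring

lemma pexp_mul (a d g a' d' g' a'' d'' g'' : ℂ) (x t : ℝ)
    (ha : a + a' = a'') (hd : d + d' = d'') (hg : g + g' = g'') :
    pexp a d g x t * pexp a' d' g' x t = pexp a'' d'' g'' x t := by
  simp only [pexp, ← Complex.exp_add]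
  congr 1
  rw [← ha, ← hd, ← hg]; ring

lemma pexp_zero (x t : ℝ) : pexp 0 0 0 x t = 1 := by simp [pexp]

lemma exp3 (c e a b d : ℂ) (h : a + b + d = e) :
    Complex.exp a * (c * Complex.exp b) * Complex.exp d = c * Complex.exp e := by
  rw [← h]; simp [Complex.exp_add]; ring

lemma Emat_eq (A δ : ℝ) (w lam : ℂ) :
    Emat A δ w lam = !![1, (𝕚 * A / (lam + w)) * Complex.exp (𝕚*δ);
      (𝕚 * A / (lam + w)) * Complex.exp (-(𝕚*δ)), 1] := by
  rw [Emat, dexp, sigma1, Matrix.mul_fin_two, Matrix.one_fin_two, Matrix.smul_of]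
  ext i j; fin_cases i <;> fin_cases j <;> simp

lemma phiPW_eq (A V δ : ℝ) (k lam : ℂ) (x t : ℝ) :
    phiPW A V δ k lam x t =
    !![1 * pexp (𝕚*lam - 𝕚*V/2) (-(𝕚*((V:ℂ)^2-2*A^2)/2) - 2*𝕚*lam*(k - V/2)) 0 x t, (𝕚 * (A:ℂ) / (lam + (k + (V:ℂ)/2))) * pexp (-(𝕚*lam) - 𝕚*V/2) (-(𝕚*((V:ℂ)^2-2*A^2)/2) + 2*𝕚*lam*(k - V/2)) (𝕚*δ) x t;
       (𝕚 * (A:ℂ) / (lam + (k + (V:ℂ)/2))) * pexp (𝕚*lam + 𝕚*V/2) (𝕚*((V:ℂ)^2-2*A^2)/2 - 2*𝕚*lam*(k - V/2)) (-(𝕚*δ)) x t, 1 * pexp (-(𝕚*lam) + 𝕚*V/2) (𝕚*((V:ℂ)^2-2*A^2)/2 + 2*𝕚*lam*(k - V/2)) 0 x t] := by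
  rw [phiPW, Emat_eq, dexp, dexp, Matrix.mul_fin_two, Matrix.mul_fin_two]
  ext i j
  fin_cases i <;> fin_cases j <;>
    simp [pexp, thetaPW, fph, ← Complex.exp_add] <;>
    first
      | (apply exp3; push_cast; ring)
      | (congr 1; push_cast; ring)

lemma qpw_eq (A V δ : ℝ) (x t : ℝ) :
    qpw A V δ x t = (A:ℂ) * pexp (-(𝕚*V)) (-(𝕚*((V:ℂ)^2-2*A^2))) (𝕚*δ) x t := by
  rw [qpw, pexp]
  congr 1
  rw [fph]; push_cast; ring

lemma qpw_conj (A V δ : ℝ) (x t : ℝ) :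
    (starRingEnd ℂ) (qpw A V δ x t) = (A:ℂ) * pexp (𝕚*V) (𝕚*((V:ℂ)^2-2*A^2)) (-(𝕚*δ)) x t := by
  rw [qpw_eq, map_mul, Complex.conj_ofReal, pexp, pexp, ← Complex.exp_conj]
  congr 1
  simp only [map_add, map_mul, map_sub, map_pow, map_neg, map_ofNat, Complex.conj_I, Complex.conj_ofReal]
  ring

lemma Xmat_eq (A V δ : ℝ) (k : ℂ) (x t : ℝ) :
    Xmat (qpw A V δ) x t k =
      !![𝕚*k, (A:ℂ) * pexp (-(𝕚*V)) (-(𝕚*((V:ℂ)^2-2*A^2))) (𝕚*δ) x t;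
         -((A:ℂ) * pexp (𝕚*V) (𝕚*((V:ℂ)^2-2*A^2)) (-(𝕚*δ)) x t), -(𝕚*k)] := by
  rw [Xmat, Qmat, sigma3, qpw_conj, qpw_eq]
  ext i j; fin_cases i <;> fin_cases j <;> simp

lemma Qx_eq (A V δ : ℝ) (x t : ℝ) :
    mderiv (fun ξ => Qmat (qpw A V δ) ξ t) x =
      !![0, (-(𝕚*V)) * ((A:ℂ) * pexp (-(𝕚*V)) (-(𝕚*((V:ℂ)^2-2*A^2))) (𝕚*δ) x t);
         (𝕚*V) * (-(A:ℂ) * pexp (𝕚*V) (𝕚*((V:ℂ)^2-2*A^2)) (-(𝕚*δ)) x t), 0] := by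
  ext i j
  fin_cases i <;> fin_cases j
  · simp [mderiv, Qmat]
  · simp only [mderiv, Matrix.of_apply, Qmat, Matrix.cons_val', Matrix.cons_val_zero,
      Matrix.cons_val_one, Matrix.head_cons, Matrix.head_fin_const, Matrix.empty_val',
      Matrix.cons_val_fin_one, Fin.zero_eta, Fin.mk_one, Fin.isValue]
    rw [show (fun u : ℝ => qpw A V δ u t) = fun u => (A:ℂ) * pexp (-(𝕚*V)) (-(𝕚*((V:ℂ)^2-2*A^2))) (𝕚*δ) u t from
      funext fun u => qpw_eq A V δ u t]
    exact pexp_fst _ _ _ _ _ _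
  · simp only [mderiv, Matrix.of_apply, Qmat, Matrix.cons_val', Matrix.cons_val_zero,
      Matrix.cons_val_one, Matrix.head_cons, Matrix.head_fin_const, Matrix.empty_val',
      Matrix.cons_val_fin_one, Fin.zero_eta, Fin.mk_one, Fin.isValue]
    rw [show (fun u : ℝ => -(starRingEnd ℂ) (qpw A V δ u t)) =
        fun u => (-(A:ℂ)) * pexp (𝕚*V) (𝕚*((V:ℂ)^2-2*A^2)) (-(𝕚*δ)) u t from
      funext fun u => by rw [qpw_conj]; ring]
    exact pexp_fst _ _ _ _ _ _
  · simp [mderiv, Qmat]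

lemma Qsq_eq (A V δ : ℝ) (x t : ℝ) :
    Qmat (qpw A V δ) x t ^ 2 = !![-(A:ℂ)^2, 0; 0, -(A:ℂ)^2] := by
  have hm : pexp (-(𝕚*V)) (-(𝕚*((V:ℂ)^2-2*A^2))) (𝕚*δ) x t * pexp (𝕚*V) (𝕚*((V:ℂ)^2-2*A^2)) (-(𝕚*δ)) x t = pexp 0 0 0 x t :=
    pexp_mul _ _ _ _ _ _ _ _ _ x t (by ring) (by ring) (by ring)
  rw [pow_two, Qmat, qpw_conj, qpw_eq, Matrix.mul_fin_two]
  ext i j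
  fin_cases i <;> fin_cases j <;>
    simp only [Matrix.of_apply, Matrix.cons_val', Matrix.cons_val_zero, Matrix.cons_val_one,
      Matrix.head_cons, Matrix.head_fin_const, Matrix.empty_val', Matrix.cons_val_fin_one,
      Fin.zero_eta, Fin.mk_one, Fin.isValue] <;>
    first
      | ring1
      | linear_combination (-(A:ℂ)^2) * hm - (A:ℂ)^2 * pexp_zero x t
      | linear_combination ((A:ℂ)^2) * hm + (A:ℂ)^2 * pexp_zero x t

lemma Tmat_eq (A V δ : ℝ) (k : ℂ) (x t : ℝ) :
    Tmat (qpw A V δ) x t k =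
      !![-(2*𝕚*k^2) + 𝕚*(A:ℂ)^2, ((V:ℂ) - 2*k) * ((A:ℂ) * pexp (-(𝕚*V)) (-(𝕚*((V:ℂ)^2-2*A^2))) (𝕚*δ) x t);
         (2*k - (V:ℂ)) * ((A:ℂ) * pexp (𝕚*V) (𝕚*((V:ℂ)^2-2*A^2)) (-(𝕚*δ)) x t), 2*𝕚*k^2 - 𝕚*(A:ℂ)^2] := by
  rw [Tmat, Qx_eq, Qsq_eq, sigma3, Qmat, qpw_conj, qpw_eq]
  ext i j
  fin_cases i <;> fin_cases j <;>
    simp only [Matrix.of_apply, Matrix.add_apply, Matrix.sub_apply, Matrix.smul_apply,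
      Matrix.mul_apply, Fin.sum_univ_two, Matrix.cons_val', Matrix.cons_val_zero,
      Matrix.cons_val_one, Matrix.head_cons, Matrix.head_fin_const, Matrix.empty_val',
      Matrix.cons_val_fin_one, Fin.zero_eta, Fin.mk_one, Fin.isValue, smul_eq_mul] <;>
    first
      | ring1
      | linear_combination (-((V:ℂ) * (A:ℂ) * pexp (-(𝕚*V)) (-(𝕚*((V:ℂ)^2-2*A^2))) (𝕚*δ) x t)) * Complex.I_sq
      | linear_combination (((V:ℂ) * (A:ℂ) * pexp (-(𝕚*V)) (-(𝕚*((V:ℂ)^2-2*A^2))) (𝕚*δ) x t)) * Complex.I_sq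
      | linear_combination (-((V:ℂ) * (A:ℂ) * pexp (𝕚*V) (𝕚*((V:ℂ)^2-2*A^2)) (-(𝕚*δ)) x t)) * Complex.I_sq
      | linear_combination (((V:ℂ) * (A:ℂ) * pexp (𝕚*V) (𝕚*((V:ℂ)^2-2*A^2)) (-(𝕚*δ)) x t)) * Complex.I_sq


/-- Let `A > 0`, `V, δ ∈ ℝ`, `k ∈ ℂ`, and `λ ∈ ℂ` with `λ² = (k + V/2)² + A²`.  Then
`φ(x,t) = exp(−ifσ₃)·E·exp(iθσ₃)` satisfies both Lax pair equations
`φ_x = (ikσ₃ + Q)φ` and `φ_t = (−2ik²σ₃ + iσ₃(Q_x − Q²) − 2kQ)φ` for all `(x,t) ∈ ℝ²`. -/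
theorem planeWave_eigenfunction_solves_LaxPair (A V δ : ℝ) (hA : 0 < A) (k lam : ℂ)
    (hlam : lam ^ 2 = (k + (V : ℂ) / 2) ^ 2 + (A : ℂ) ^ 2) :
    ∀ x t : ℝ,
      mderiv (fun ξ => phiPW A V δ k lam ξ t) x
          = Xmat (qpw A V δ) x t k * phiPW A V δ k lam x t
      ∧ mderiv (fun τ => phiPW A V δ k lam x τ) t
          = Tmat (qpw A V δ) x t k * phiPW A V δ k lam x t := by
  intro x t
  have hA0 : (A:ℂ) ≠ 0 := by
    simp only [ne_eq, Complex.ofReal_eq_zero]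
    exact hA.ne'
  have hw : lam + (k + (V:ℂ)/2) ≠ 0 := by
    intro h
    have hl : lam = -(k + (V:ℂ)/2) := by linear_combination h
    rw [hl] at hlam
    have h2 : (A:ℂ)^2 = 0 := by linear_combination -hlam
    exact hA0 ((pow_eq_zero_iff two_ne_zero).mp h2)
  have hfact : (lam - (k + (V:ℂ)/2)) * (lam + (k + (V:ℂ)/2)) = (A:ℂ)^2 := by
    linear_combination hlam
  -- product lemmas
  have hm1 : pexp (-(𝕚*V)) (-(𝕚*((V:ℂ)^2-2*A^2))) (𝕚*δ) x t * pexp (𝕚*lam + 𝕚*V/2) (𝕚*((V:ℂ)^2-2*A^2)/2 - 2*𝕚*lam*(k - V/2)) (-(𝕚*δ)) x t = pexp (𝕚*lam - 𝕚*V/2) (-(𝕚*((V:ℂ)^2-2*A^2)/2) - 2*𝕚*lam*(k - V/2)) 0 x t :=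
    pexp_mul _ _ _ _ _ _ _ _ _ x t (by ring) (by ring) (by ring)
  have hm2 : pexp (-(𝕚*V)) (-(𝕚*((V:ℂ)^2-2*A^2))) (𝕚*δ) x t * pexp (-(𝕚*lam) + 𝕚*V/2) (𝕚*((V:ℂ)^2-2*A^2)/2 + 2*𝕚*lam*(k - V/2)) 0 x t = pexp (-(𝕚*lam) - 𝕚*V/2) (-(𝕚*((V:ℂ)^2-2*A^2)/2) + 2*𝕚*lam*(k - V/2)) (𝕚*δ) x t :=
    pexp_mul _ _ _ _ _ _ _ _ _ x t (by ring) (by ring) (by ring)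
  have hm3 : pexp (𝕚*V) (𝕚*((V:ℂ)^2-2*A^2)) (-(𝕚*δ)) x t * pexp (𝕚*lam - 𝕚*V/2) (-(𝕚*((V:ℂ)^2-2*A^2)/2) - 2*𝕚*lam*(k - V/2)) 0 x t = pexp (𝕚*lam + 𝕚*V/2) (𝕚*((V:ℂ)^2-2*A^2)/2 - 2*𝕚*lam*(k - V/2)) (-(𝕚*δ)) x t :=
    pexp_mul _ _ _ _ _ _ _ _ _ x t (by ring) (by ring) (by ring)
  have hm4 : pexp (𝕚*V) (𝕚*((V:ℂ)^2-2*A^2)) (-(𝕚*δ)) x t * pexp (-(𝕚*lam) - 𝕚*V/2) (-(𝕚*((V:ℂ)^2-2*A^2)/2) + 2*𝕚*lam*(k - V/2)) (𝕚*δ) x t = pexp (-(𝕚*lam) + 𝕚*V/2) (𝕚*((V:ℂ)^2-2*A^2)/2 + 2*𝕚*lam*(k - V/2)) 0 x t :=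
    pexp_mul _ _ _ _ _ _ _ _ _ x t (by ring) (by ring) (by ring)
  -- coefficient identities
  have hDc : (𝕚 * (A:ℂ) / (lam + (k + (V:ℂ)/2))) * (lam + (k + (V:ℂ)/2)) = 𝕚 * (A:ℂ) :=
    div_mul_cancel₀ _ hw
  have hAc : (A:ℂ) * (𝕚 * (A:ℂ) / (lam + (k + (V:ℂ)/2))) = 𝕚 * (lam - (k + (V:ℂ)/2)) := by
    apply mul_right_cancel₀ hw
    linear_combination (A:ℂ) * hDc - 𝕚 * hfact
  have hc1 : (𝕚*lam - 𝕚*V/2) = 𝕚*k + (A:ℂ) * (𝕚 * (A:ℂ) / (lam + (k + (V:ℂ)/2))) := by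
    linear_combination -hAc
  have hc2 : (-(𝕚*lam) - 𝕚*V/2) * (𝕚 * (A:ℂ) / (lam + (k + (V:ℂ)/2))) = 𝕚*k * (𝕚 * (A:ℂ) / (lam + (k + (V:ℂ)/2))) + (A:ℂ) := by
    linear_combination -𝕚*hDc - (A:ℂ)*Complex.I_sq
  have hc3 : (𝕚*lam + 𝕚*V/2) * (𝕚 * (A:ℂ) / (lam + (k + (V:ℂ)/2))) = -(A:ℂ) + -(𝕚*k) * (𝕚 * (A:ℂ) / (lam + (k + (V:ℂ)/2))) := by
    linear_combination 𝕚*hDc + (A:ℂ)*Complex.I_sq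
  have hc4 : (-(𝕚*lam) + 𝕚*V/2) = -(A:ℂ) * (𝕚 * (A:ℂ) / (lam + (k + (V:ℂ)/2))) - 𝕚*k := by
    linear_combination hAc
  have hd1 : (-(𝕚*((V:ℂ)^2-2*A^2)/2) - 2*𝕚*lam*(k - V/2)) = (-(2*𝕚*k^2) + 𝕚*(A:ℂ)^2) + ((V:ℂ) - 2*k) * ((A:ℂ) * (𝕚 * (A:ℂ) / (lam + (k + (V:ℂ)/2)))) := by
    linear_combination (2*k - (V:ℂ)) * hAc
  have hd2 : (-(𝕚*((V:ℂ)^2-2*A^2)/2) + 2*𝕚*lam*(k - V/2)) * (𝕚 * (A:ℂ) / (lam + (k + (V:ℂ)/2))) = (-(2*𝕚*k^2) + 𝕚*(A:ℂ)^2) * (𝕚 * (A:ℂ) / (lam + (k + (V:ℂ)/2))) + ((V:ℂ) - 2*k) * (A:ℂ) := by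
    linear_combination 𝕚*(2*k - (V:ℂ))*hDc + ((2*k - (V:ℂ))*(A:ℂ))*Complex.I_sq
  have hd3 : (𝕚*((V:ℂ)^2-2*A^2)/2 - 2*𝕚*lam*(k - V/2)) * (𝕚 * (A:ℂ) / (lam + (k + (V:ℂ)/2))) = (2*k - (V:ℂ)) * (A:ℂ) + (2*𝕚*k^2 - 𝕚*(A:ℂ)^2) * (𝕚 * (A:ℂ) / (lam + (k + (V:ℂ)/2))) := by
    linear_combination 𝕚*((V:ℂ) - 2*k)*hDc + (((V:ℂ) - 2*k)*(A:ℂ))*Complex.I_sq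
  have hd4 : (𝕚*((V:ℂ)^2-2*A^2)/2 + 2*𝕚*lam*(k - V/2)) = (2*k - (V:ℂ)) * (A:ℂ) * (𝕚 * (A:ℂ) / (lam + (k + (V:ℂ)/2))) + (2*𝕚*k^2 - 𝕚*(A:ℂ)^2) := by
    linear_combination ((V:ℂ) - 2*k) * hAc
  -- derivative in x
  have hdx : mderiv (fun ξ => phiPW A V δ k lam ξ t) x =
      !![(𝕚*lam - 𝕚*V/2) * (1 * pexp (𝕚*lam - 𝕚*V/2) (-(𝕚*((V:ℂ)^2-2*A^2)/2) - 2*𝕚*lam*(k - V/2)) 0 x t), (-(𝕚*lam) - 𝕚*V/2) * ((𝕚 * (A:ℂ) / (lam + (k + (V:ℂ)/2))) * pexp (-(𝕚*lam) - 𝕚*V/2) (-(𝕚*((V:ℂ)^2-2*A^2)/2) + 2*𝕚*lam*(k - V/2)) (𝕚*δ) x t);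
         (𝕚*lam + 𝕚*V/2) * ((𝕚 * (A:ℂ) / (lam + (k + (V:ℂ)/2))) * pexp (𝕚*lam + 𝕚*V/2) (𝕚*((V:ℂ)^2-2*A^2)/2 - 2*𝕚*lam*(k - V/2)) (-(𝕚*δ)) x t), (-(𝕚*lam) + 𝕚*V/2) * (1 * pexp (-(𝕚*lam) + 𝕚*V/2) (𝕚*((V:ℂ)^2-2*A^2)/2 + 2*𝕚*lam*(k - V/2)) 0 x t)] := by
    ext i j
    fin_cases i <;> fin_cases j <;>
      simp only [mderiv, Matrix.of_apply, Matrix.cons_val', Matrix.cons_val_zero,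
        Matrix.cons_val_one, Matrix.head_cons, Matrix.head_fin_const, Matrix.empty_val',
        Matrix.cons_val_fin_one, Fin.zero_eta, Fin.mk_one, Fin.isValue]
    · rw [show (fun u : ℝ => phiPW A V δ k lam u t 0 0) =
          fun u => 1 * pexp (𝕚*lam - 𝕚*V/2) (-(𝕚*((V:ℂ)^2-2*A^2)/2) - 2*𝕚*lam*(k - V/2)) 0 u t from funext fun u => by rw [phiPW_eq]; simp]
      exact pexp_fst _ _ _ _ _ _
    · rw [show (fun u : ℝ => phiPW A V δ k lam u t 0 1) =
          fun u => (𝕚 * (A:ℂ) / (lam + (k + (V:ℂ)/2))) * pexp (-(𝕚*lam) - 𝕚*V/2) (-(𝕚*((V:ℂ)^2-2*A^2)/2) + 2*𝕚*lam*(k - V/2)) (𝕚*δ) u t from funext fun u => by rw [phiPW_eq]; simp]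
      exact pexp_fst _ _ _ _ _ _
    · rw [show (fun u : ℝ => phiPW A V δ k lam u t 1 0) =
          fun u => (𝕚 * (A:ℂ) / (lam + (k + (V:ℂ)/2))) * pexp (𝕚*lam + 𝕚*V/2) (𝕚*((V:ℂ)^2-2*A^2)/2 - 2*𝕚*lam*(k - V/2)) (-(𝕚*δ)) u t from funext fun u => by rw [phiPW_eq]; simp]
      exact pexp_fst _ _ _ _ _ _
    · rw [show (fun u : ℝ => phiPW A V δ k lam u t 1 1) =
          fun u => 1 * pexp (-(𝕚*lam) + 𝕚*V/2) (𝕚*((V:ℂ)^2-2*A^2)/2 + 2*𝕚*lam*(k - V/2)) 0 u t from funext fun u => by rw [phiPW_eq]; simp]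
      exact pexp_fst _ _ _ _ _ _
  -- derivative in t
  have hdt : mderiv (fun τ => phiPW A V δ k lam x τ) t =
      !![(-(𝕚*((V:ℂ)^2-2*A^2)/2) - 2*𝕚*lam*(k - V/2)) * (1 * pexp (𝕚*lam - 𝕚*V/2) (-(𝕚*((V:ℂ)^2-2*A^2)/2) - 2*𝕚*lam*(k - V/2)) 0 x t), (-(𝕚*((V:ℂ)^2-2*A^2)/2) + 2*𝕚*lam*(k - V/2)) * ((𝕚 * (A:ℂ) / (lam + (k + (V:ℂ)/2))) * pexp (-(𝕚*lam) - 𝕚*V/2) (-(𝕚*((V:ℂ)^2-2*A^2)/2) + 2*𝕚*lam*(k - V/2)) (𝕚*δ) x t);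
         (𝕚*((V:ℂ)^2-2*A^2)/2 - 2*𝕚*lam*(k - V/2)) * ((𝕚 * (A:ℂ) / (lam + (k + (V:ℂ)/2))) * pexp (𝕚*lam + 𝕚*V/2) (𝕚*((V:ℂ)^2-2*A^2)/2 - 2*𝕚*lam*(k - V/2)) (-(𝕚*δ)) x t), (𝕚*((V:ℂ)^2-2*A^2)/2 + 2*𝕚*lam*(k - V/2)) * (1 * pexp (-(𝕚*lam) + 𝕚*V/2) (𝕚*((V:ℂ)^2-2*A^2)/2 + 2*𝕚*lam*(k - V/2)) 0 x t)] := by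
    ext i j
    fin_cases i <;> fin_cases j <;>
      simp only [mderiv, Matrix.of_apply, Matrix.cons_val', Matrix.cons_val_zero,
        Matrix.cons_val_one, Matrix.head_cons, Matrix.head_fin_const, Matrix.empty_val',
        Matrix.cons_val_fin_one, Fin.zero_eta, Fin.mk_one, Fin.isValue]
    · rw [show (fun u : ℝ => phiPW A V δ k lam x u 0 0) =
          fun u => 1 * pexp (𝕚*lam - 𝕚*V/2) (-(𝕚*((V:ℂ)^2-2*A^2)/2) - 2*𝕚*lam*(k - V/2)) 0 x u from funext fun u => by rw [phiPW_eq]; simp]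
      exact pexp_snd _ _ _ _ _ _
    · rw [show (fun u : ℝ => phiPW A V δ k lam x u 0 1) =
          fun u => (𝕚 * (A:ℂ) / (lam + (k + (V:ℂ)/2))) * pexp (-(𝕚*lam) - 𝕚*V/2) (-(𝕚*((V:ℂ)^2-2*A^2)/2) + 2*𝕚*lam*(k - V/2)) (𝕚*δ) x u from funext fun u => by rw [phiPW_eq]; simp]
      exact pexp_snd _ _ _ _ _ _
    · rw [show (fun u : ℝ => phiPW A V δ k lam x u 1 0) =
          fun u => (𝕚 * (A:ℂ) / (lam + (k + (V:ℂ)/2))) * pexp (𝕚*lam + 𝕚*V/2) (𝕚*((V:ℂ)^2-2*A^2)/2 - 2*𝕚*lam*(k - V/2)) (-(𝕚*δ)) x u from funext fun u => by rw [phiPW_eq]; simp]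
      exact pexp_snd _ _ _ _ _ _
    · rw [show (fun u : ℝ => phiPW A V δ k lam x u 1 1) =
          fun u => 1 * pexp (-(𝕚*lam) + 𝕚*V/2) (𝕚*((V:ℂ)^2-2*A^2)/2 + 2*𝕚*lam*(k - V/2)) 0 x u from funext fun u => by rw [phiPW_eq]; simp]
      exact pexp_snd _ _ _ _ _ _
  constructor
  · rw [hdx, Xmat_eq, phiPW_eq, Matrix.mul_fin_two]
    ext i j
    fin_cases i <;> fin_cases j <;>
      simp only [Matrix.of_apply, Matrix.cons_val', Matrix.cons_val_zero, Matrix.cons_val_one,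
        Matrix.head_cons, Matrix.head_fin_const, Matrix.empty_val', Matrix.cons_val_fin_one,
        Fin.zero_eta, Fin.mk_one, Fin.isValue]
    · linear_combination
        (pexp (𝕚*lam - 𝕚*V/2) (-(𝕚*((V:ℂ)^2-2*A^2)/2) - 2*𝕚*lam*(k - V/2)) 0 x t) * hc1 - ((A:ℂ) * (𝕚 * (A:ℂ) / (lam + (k + (V:ℂ)/2)))) * hm1
    · linear_combination
        (pexp (-(𝕚*lam) - 𝕚*V/2) (-(𝕚*((V:ℂ)^2-2*A^2)/2) + 2*𝕚*lam*(k - V/2)) (𝕚*δ) x t) * hc2 - (A:ℂ) * hm2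
    · linear_combination
        (pexp (𝕚*lam + 𝕚*V/2) (𝕚*((V:ℂ)^2-2*A^2)/2 - 2*𝕚*lam*(k - V/2)) (-(𝕚*δ)) x t) * hc3 + (A:ℂ) * hm3
    · linear_combination
        (pexp (-(𝕚*lam) + 𝕚*V/2) (𝕚*((V:ℂ)^2-2*A^2)/2 + 2*𝕚*lam*(k - V/2)) 0 x t) * hc4 + ((A:ℂ) * (𝕚 * (A:ℂ) / (lam + (k + (V:ℂ)/2)))) * hm4
  · rw [hdt, Tmat_eq, phiPW_eq, Matrix.mul_fin_two]
    ext i j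
    fin_cases i <;> fin_cases j <;>
      simp only [Matrix.of_apply, Matrix.cons_val', Matrix.cons_val_zero, Matrix.cons_val_one,
        Matrix.head_cons, Matrix.head_fin_const, Matrix.empty_val', Matrix.cons_val_fin_one,
        Fin.zero_eta, Fin.mk_one, Fin.isValue]
    · linear_combination
        (pexp (𝕚*lam - 𝕚*V/2) (-(𝕚*((V:ℂ)^2-2*A^2)/2) - 2*𝕚*lam*(k - V/2)) 0 x t) * hd1 - (((V:ℂ) - 2*k) * (A:ℂ) * (𝕚 * (A:ℂ) / (lam + (k + (V:ℂ)/2)))) * hm1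
    · linear_combination
        (pexp (-(𝕚*lam) - 𝕚*V/2) (-(𝕚*((V:ℂ)^2-2*A^2)/2) + 2*𝕚*lam*(k - V/2)) (𝕚*δ) x t) * hd2 - (((V:ℂ) - 2*k) * (A:ℂ)) * hm2
    · linear_combination
        (pexp (𝕚*lam + 𝕚*V/2) (𝕚*((V:ℂ)^2-2*A^2)/2 - 2*𝕚*lam*(k - V/2)) (-(𝕚*δ)) x t) * hd3 - ((2*k - (V:ℂ)) * (A:ℂ)) * hm3
    · linear_combination
        (pexp (-(𝕚*lam) + 𝕚*V/2) (𝕚*((V:ℂ)^2-2*A^2)/2 + 2*𝕚*lam*(k - V/2)) 0 x t) * hd4 - ((2*k - (V:ℂ)) * (A:ℂ) * (𝕚 * (A:ℂ) / (lam + (k + (V:ℂ)/2)))) * hm4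
end
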